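/- The set M₊ = {(x, y, θ) ∈ ℝ² × (0, 2π) : x² + y² < 1 and x sin(θ/2) − y cos(θ/2) > 0} is open, path-connected, and simply connected. -/

import Mathlib

/-!
Rotating the `(x, y)`-plane by an angle depending continuously on `θ` is a homeomorphism of `ℝ³`
preserving `x² + y²`; for the right choice of angle it turns `P(x, y, θ)` into the new first
coordinate. It therefore carries `M₊` onto the convex open set
`{x² + y² < 1, x > 0} × (0, 2π)`, and nonempty convex sets are contractible.
-/

/-- The domain `M₊ = {(x, y, θ) ∈ ℝ² × (0, 2π) : x² + y² < 1, P(x,y,θ) > 0}`,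
where `P(x,y,θ) = x sin(θ/2) − y cos(θ/2)`. -/
def Mplus : Set (ℝ × ℝ × ℝ) :=
  {p | p.2.2 ∈ Set.Ioo 0 (2 * Real.pi) ∧ p.1 ^ 2 + p.2.1 ^ 2 < 1 ∧
    0 < p.1 * Real.sin (p.2.2 / 2) - p.2.1 * Real.cos (p.2.2 / 2)}

open Real Set

theorem Convex.isSimplyConnected {E : Type*} [AddCommGroup E] [Module ℝ E] [TopologicalSpace E]
    [IsTopologicalAddGroup E] [ContinuousSMul ℝ E] {s : Set E} (hs : Convex ℝ s)
    (hne : s.Nonempty) : IsSimplyConnected s :=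
  haveI := hs.contractibleSpace hne
  SimplyConnectedSpace.ofContractible s

lemma sq_add_sq_rotate (x y φ : ℝ) :
    (x * sin φ - y * cos φ) ^ 2 + (x * cos φ + y * sin φ) ^ 2 = x ^ 2 + y ^ 2 := by
  linear_combination (x ^ 2 + y ^ 2) * sin_sq_add_cos_sq φ

/-- The rotation of the `(x, y)`-plane sending `(sin (α t), -cos (α t))` to `(1, 0)`, applied in
the fibre over each `t`. -/
noncomputable def twistRotation (α : ℝ → ℝ) (hα : Continuous α) :
    (ℝ × ℝ × ℝ) ≃ₜ (ℝ × ℝ × ℝ) where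
  toFun p := (p.1 * sin (α p.2.2) - p.2.1 * cos (α p.2.2),
    p.1 * cos (α p.2.2) + p.2.1 * sin (α p.2.2), p.2.2)
  invFun p := (p.1 * sin (α p.2.2) + p.2.1 * cos (α p.2.2),
    -p.1 * cos (α p.2.2) + p.2.1 * sin (α p.2.2), p.2.2)
  left_inv := fun ⟨x, y, t⟩ => by
    have h := sin_sq_add_cos_sq (α t)
    ext
    · linear_combination x * h
    · linear_combination y * h
    · rfl
  right_inv := fun ⟨x, y, t⟩ => by
    have h := sin_sq_add_cos_sq (α t)
    ext
    · linear_combination x * h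
    · linear_combination y * h
    · rfl
  continuous_toFun := by fun_prop
  continuous_invFun := by fun_prop

def halfDiscPrism : Set (ℝ × ℝ × ℝ) :=
  {p | p.2.2 ∈ Ioo 0 (2 * π)} ∩ ({p | p.1 ^ 2 + p.2.1 ^ 2 < 1} ∩ {p | 0 < p.1})

lemma Mplus_eq_preimage_halfDiscPrism :
    Mplus = twistRotation (· / 2) (by fun_prop) ⁻¹' halfDiscPrism := by
  ext ⟨x, y, t⟩
  simp only [Mplus, halfDiscPrism, twistRotation, mem_preimage, mem_inter_iff, mem_ofPred_eq,
    Homeomorph.homeomorph_mk_coe, Equiv.coe_fn_mk, sq_add_sq_rotate]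

lemma isOpen_halfDiscPrism : IsOpen halfDiscPrism :=
  (isOpen_Ioo.preimage (by fun_prop)).inter
    ((isOpen_lt (by fun_prop) continuous_const).inter (isOpen_lt continuous_const (by fun_prop)))

lemma convex_halfDiscPrism : Convex ℝ halfDiscPrism := by
  have hsq : ConvexOn ℝ univ fun x : ℝ => x ^ 2 := even_two.convexOn_pow
  have hnormSq := (hsq.comp_linearMap (LinearMap.fst ℝ ℝ (ℝ × ℝ))).add
    (hsq.comp_linearMap (LinearMap.fst ℝ ℝ ℝ ∘ₗ LinearMap.snd ℝ ℝ (ℝ × ℝ)))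
  refine ((convex_Ioo 0 (2 * π)).linear_preimage
    (LinearMap.snd ℝ ℝ ℝ ∘ₗ LinearMap.snd ℝ ℝ (ℝ × ℝ))).inter ?_
  refine .inter (by simpa using hnormSq.convex_lt 1) ?_
  exact convex_halfSpace_gt (LinearMap.fst ℝ ℝ (ℝ × ℝ)).isLinear 0

lemma halfDiscPrism_nonempty : halfDiscPrism.Nonempty :=
  ⟨(1 / 2, 0, π), ⟨pi_pos, by linarith [pi_pos]⟩, by norm_num, by norm_num⟩

/-- The set `M₊` is open, path-connected, and simply connected. -/
theorem Mplus_open_connected_simplyConnected :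
    IsOpen Mplus ∧ IsPathConnected Mplus ∧ SimplyConnectedSpace ↥Mplus := by
  have hM : IsSimplyConnected Mplus := by
    rw [Mplus_eq_preimage_halfDiscPrism, Homeomorph.isSimplyConnected_preimage]
    exact convex_halfDiscPrism.isSimplyConnected halfDiscPrism_nonempty
  refine ⟨?_, hM.isPathConnected, hM.simplyConnectedSpace⟩
  rw [Mplus_eq_preimage_halfDiscPrism]
  exact isOpen_halfDiscPrism.preimage (Homeomorph.continuous _)
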